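/- Let F, K ∈ Matrix (Fin 3) (Fin 2) ℝ, let R ∈ Matrix (Fin 3) (Fin 3) ℝ be a special orthogonal matrix (RᵀR = 1, det R = 1) satisfying R e₃ = e₃, and let t ∈ ℝ². Then the three quantities Fᵀ F, Fᵀ e₃ and Fᵀ C K are invariant under the drilling-rotation action: (R F)ᵀ (R F) = Fᵀ F, (R F)ᵀ e₃ = Fᵀ e₃, and (R F)ᵀ C (R K + e₃ tᵀ) = Fᵀ C K. Consequently, any strain energy of the form W(F, K) = Ŵ(Fᵀ F, Fᵀ e₃, Fᵀ C K) satisfies W(R F, R K + e₃ tᵀ) = W(F, K). (This is the 'if' direction of the paper's representation theorem for shells without drilling rotations, expressed in a fixed material frame.) -/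

import Mathlib

open Matrix

/-- The unit normal `e₃` in the fixed material frame. -/
def e3 : Fin 3 → ℝ := ![0, 0, 1]

/-- The alternator matrix `C` of the map `v ↦ e₃ × v`. -/
def altC : Matrix (Fin 3) (Fin 3) ℝ := !![0, -1, 0; 1, 0, 0; 0, 0, 0]

/-!
`FᵀF` and `Fᵀe₃` only see `R` through `RᵀR = 1` and `Rᵀe₃ = e₃`. For the curvature invariant,
`C e₃ = 0` annihilates the drilling term `e₃ tᵀ`, and a rotation about `e₃` is block diagonal,
`R = diag(Q, 1)` with `Q ∈ SO(2)`, so that `Rᵀ C R = det Q • C = C`.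
-/

namespace Matrix

variable {α m n : Type*} [CommSemiring α] [Fintype m] [DecidableEq m] {R : Matrix m m α}

theorem transpose_mulVec_eq_of_mulVec_eq (hR : Rᵀ * R = 1) {v : m → α} (hv : R *ᵥ v = v) :
    Rᵀ *ᵥ v = v := by
  conv_lhs => rw [← hv]
  rw [mulVec_mulVec, hR, one_mulVec]

theorem transpose_mul_self_mul_left (hR : Rᵀ * R = 1) (F : Matrix m n α) :
    (R * F)ᵀ * (R * F) = Fᵀ * F := by
  rw [transpose_mul, Matrix.mul_assoc, ← Matrix.mul_assoc Rᵀ, hR, Matrix.one_mul]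

theorem transpose_mul_left_mulVec_of_mulVec_eq [Fintype n] (hR : Rᵀ * R = 1)
    (F : Matrix m n α) {v : m → α} (hv : R *ᵥ v = v) : (R * F)ᵀ *ᵥ v = Fᵀ *ᵥ v := by
  rw [transpose_mul, ← mulVec_mulVec, transpose_mulVec_eq_of_mulVec_eq hR hv]

end Matrix

theorem altC_mulVec_e3 : altC *ᵥ e3 = 0 := by
  ext i
  fin_cases i <;> simp [altC, e3, mulVec, dotProduct, Fin.sum_univ_three]

theorem altC_mul_vecMulVec_e3 {n : Type*} (t : n → ℝ) : altC * vecMulVec e3 t = 0 := by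
  rw [mul_vecMulVec, altC_mulVec_e3, zero_vecMulVec]

theorem transpose_mul_altC_mul_of_mulVec_e3 {R : Matrix (Fin 3) (Fin 3) ℝ}
    (hcol : R *ᵥ e3 = e3) (hrow : Rᵀ *ᵥ e3 = e3) : Rᵀ * altC * R = R.det • altC := by
  have third_col {M : Matrix (Fin 3) (Fin 3) ℝ} (h : M *ᵥ e3 = e3) :
      M 0 2 = 0 ∧ M 1 2 = 0 ∧ M 2 2 = 1 := by
    have := congrFun h
    simp only [mulVec, dotProduct, e3, Fin.sum_univ_three] at this
    simpa using And.intro (this 0) (And.intro (this 1) (this 2))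
  obtain ⟨h02, h12, h22⟩ := third_col hcol
  obtain ⟨h20, h21, -⟩ := third_col hrow
  simp only [transpose_apply] at h20 h21
  ext i j
  fin_cases i <;> fin_cases j <;>
    simp [mul_apply, Fin.sum_univ_three, altC, det_fin_three, h02, h12, h22, h20, h21] <;> ring

theorem transpose_mul_altC_mul_drill {n : Type*} [Fintype n] {R : Matrix (Fin 3) (Fin 3) ℝ}
    (hR : Rᵀ * R = 1) (hdet : R.det = 1) (hRe3 : R *ᵥ e3 = e3)
    (F K : Matrix (Fin 3) n ℝ) (t : n → ℝ) :
    (R * F)ᵀ * altC * (R * K + vecMulVec e3 t) = Fᵀ * altC * K := by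
  have hconj : Rᵀ * altC * R = altC := by
    rw [transpose_mul_altC_mul_of_mulVec_e3 hRe3 (transpose_mulVec_eq_of_mulVec_eq hR hRe3),
      hdet, one_smul]
  calc (R * F)ᵀ * altC * (R * K + vecMulVec e3 t)
      = Fᵀ * (Rᵀ * altC * R) * K + Fᵀ * Rᵀ * (altC * vecMulVec e3 t) := by
        simp only [transpose_mul, Matrix.mul_add, Matrix.mul_assoc]
    _ = Fᵀ * altC * K := by rw [hconj, altC_mul_vecMulVec_e3, Matrix.mul_zero, add_zero]

theorem drilling_invariants_if_direction
    (F K : Matrix (Fin 3) (Fin 2) ℝ)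
    (R : Matrix (Fin 3) (Fin 3) ℝ) (hR : Rᵀ * R = 1) (hdet : R.det = 1)
    (hRe3 : R.mulVec e3 = e3) (t : Fin 2 → ℝ)
    (W : Matrix (Fin 3) (Fin 2) ℝ → Matrix (Fin 3) (Fin 2) ℝ → ℝ)
    (Whot : Matrix (Fin 2) (Fin 2) ℝ → (Fin 2 → ℝ) → Matrix (Fin 2) (Fin 2) ℝ → ℝ)
    (hW : ∀ F' K' : Matrix (Fin 3) (Fin 2) ℝ,
      W F' K' = Whot (F'ᵀ * F') (F'ᵀ.mulVec e3) (F'ᵀ * altC * K')) :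
    (R * F)ᵀ * (R * F) = Fᵀ * F ∧
    (R * F)ᵀ.mulVec e3 = Fᵀ.mulVec e3 ∧
    (R * F)ᵀ * altC * (R * K + vecMulVec e3 t) = Fᵀ * altC * K ∧
    W (R * F) (R * K + vecMulVec e3 t) = W F K := by
  have metric := transpose_mul_self_mul_left hR F
  have normal := transpose_mul_left_mulVec_of_mulVec_eq hR F hRe3
  have curvature := transpose_mul_altC_mul_drill hR hdet hRe3 F K t
  exact ⟨metric, normal, curvature, by rw [hW, hW, metric, normal, curvature]⟩
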